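/- For R > 0, μ > 0, n ≥ 2, and every X ∈ (0,∞)², the matrix S_n(X) := D²Φ_n(X) M(X) is symmetric positive definite; moreover, for X ∈ [0,∞)², it is positive semidefinite: ⟨S_n(X)ξ, ξ⟩ ≥ 0 for all ξ ∈ ℝ². -/

import Mathlib

open Matrix Finset

/-- `α_{k,n} = R (k + μ (n - k - 1))`. -/
noncomputable def alph (R mu : ℝ) (n k : ℕ) : ℝ := R * ((k : ℝ) + mu * ((n : ℝ) - (k : ℝ) - 1))

/-- `a_{j,n}`. -/
noncomputable def coefa (R mu : ℝ) (n j : ℕ) : ℝ :=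
  (n.choose j : ℝ) * ∏ k ∈ Finset.range j, ((k : ℝ) + alph R mu n k) / alph R mu n k

/-- `Φ_n(X) = Σ_{j=0}^n a_{j,n} X₁^j X₂^{n-j}`. -/
noncomputable def Phi (R mu : ℝ) (n : ℕ) (X : ℝ × ℝ) : ℝ :=
  ∑ j ∈ Finset.range (n + 1), coefa R mu n j * X.1 ^ j * X.2 ^ (n - j)

/-- first partial derivative of `Φ_n` in the first variable. -/
noncomputable def d1Phi (R mu : ℝ) (n : ℕ) (X : ℝ × ℝ) : ℝ :=
  deriv (fun t => Phi R mu n (t, X.2)) X.1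

/-- first partial derivative of `Φ_n` in the second variable. -/
noncomputable def d2Phi (R mu : ℝ) (n : ℕ) (X : ℝ × ℝ) : ℝ :=
  deriv (fun t => Phi R mu n (X.1, t)) X.2

/-- `∂₁²Φ_n`. -/
noncomputable def d11Phi (R mu : ℝ) (n : ℕ) (X : ℝ × ℝ) : ℝ :=
  deriv (fun t => d1Phi R mu n (t, X.2)) X.1

/-- `∂₁∂₂Φ_n`. -/
noncomputable def d12Phi (R mu : ℝ) (n : ℕ) (X : ℝ × ℝ) : ℝ :=
  deriv (fun t => d2Phi R mu n (t, X.2)) X.1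

/-- `∂₂²Φ_n`. -/
noncomputable def d22Phi (R mu : ℝ) (n : ℕ) (X : ℝ × ℝ) : ℝ :=
  deriv (fun t => d2Phi R mu n (X.1, t)) X.2

/-- The Hessian matrix `D²Φ_n(X)`. -/
noncomputable def hessPhi (R mu : ℝ) (n : ℕ) (X : ℝ × ℝ) : Matrix (Fin 2) (Fin 2) ℝ :=
  !![d11Phi R mu n X, d12Phi R mu n X; d12Phi R mu n X, d22Phi R mu n X]

/-- The mobility matrix `M(X)`. -/
noncomputable def mobM (R mu : ℝ) (X : ℝ × ℝ) : Matrix (Fin 2) (Fin 2) ℝ :=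
  !![(1 + R) * X.1, R * X.1; mu * R * X.2, mu * R * X.2]

/-- The quantity `A_{j,k}`. -/
noncomputable def Acoef (R mu : ℝ) (n j k : ℕ) : ℝ :=
  ((j : ℝ) + 2) * ((n : ℝ) - (k : ℝ)) * coefa R mu n (j + 2) * coefa R mu n k
    - ((n : ℝ) - (j : ℝ) - 1) * ((k : ℝ) + 1) * coefa R mu n (j + 1) * coefa R mu n (k + 1)

/-- `ν_n`. -/
noncomputable def nuc (R mu : ℝ) (n : ℕ) : ℝ :=
  Real.exp (((n : ℝ) - 1) * ((1 + R * max 1 mu) * Real.log (1 + 1 / (R * max 1 mu)) - 1)) - 1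


/-!
`Φ_n` is a binary form of degree `n`, so its second partials are binary forms of degree `n - 2`
with positive coefficients `p_j, q_j, r_j` (for `∂₁²Φ_n, ∂₁∂₂Φ_n, ∂₂²Φ_n`). The recursion
`(j + 1) a_{j+1} α_j = (n - j) a_j (j + α_j)` behind the `a_{j,n}` is, coefficientwise, the
symmetry of `D²Φ_n M`. It also gives `q_j² < p_j r_j`, since `(j + 1) α_j - j α_{j+1} = R μ (n - 1)`,
and termwise Cauchy–Schwarz turns this into `(∂₁∂₂Φ_n)² ≤ ∂₁²Φ_n ∂₂²Φ_n`, strictly inside the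
quadrant. As `det M = μ R X₁ X₂`, the symmetric matrix `D²Φ_n M` then has nonnegative diagonal and
determinant, positive inside the quadrant, so it is positive semidefinite, resp. definite.
-/

lemma Finset.sum_sq_lt_sum_mul_sum_of_sq_lt_mul {ι : Type*} (s : Finset ι) (hs : s.Nonempty)
    {r f g : ι → ℝ} (hg : ∀ i ∈ s, 0 < g i) (ht : ∀ i ∈ s, r i ^ 2 < f i * g i) :
    (∑ i ∈ s, r i) ^ 2 < (∑ i ∈ s, f i) * ∑ i ∈ s, g i := by
  -- Cauchy-Schwarz is sharp for `f' := r ^ 2 / g`, and `f' < f` termwise.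
  have hf' : ∀ i ∈ s, r i ^ 2 / g i < f i := fun i hi => (div_lt_iff₀ (hg i hi)).mpr (ht i hi)
  calc (∑ i ∈ s, r i) ^ 2 ≤ (∑ i ∈ s, r i ^ 2 / g i) * ∑ i ∈ s, g i :=
        sum_sq_le_sum_mul_sum_of_sq_le_mul s (fun i hi => div_nonneg (sq_nonneg _) (hg i hi).le)
          (fun i hi => (hg i hi).le) (fun i hi => (div_mul_cancel₀ _ (hg i hi).ne').ge)
    _ < (∑ i ∈ s, f i) * ∑ i ∈ s, g i :=
        mul_lt_mul_of_pos_right (sum_lt_sum_of_nonempty hs hf') (sum_pos hg hs)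

namespace Matrix.IsSymm

variable {S : Matrix (Fin 2) (Fin 2) ℝ}

lemma mul_dotProduct_mulVec_fin_two (hS : S.IsSymm) (ξ : Fin 2 → ℝ) :
    S 0 0 * (S *ᵥ ξ ⬝ᵥ ξ) = (S 0 0 * ξ 0 + S 0 1 * ξ 1) ^ 2 + S.det * ξ 1 ^ 2 := by
  have h10 : S 1 0 = S 0 1 := hS.apply 0 1
  simp only [mulVec, dotProduct, Fin.sum_univ_two, det_fin_two, h10]
  ring

lemma dotProduct_mulVec_pos (hS : S.IsSymm) (h00 : 0 < S 0 0) (hdet : 0 < S.det)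
    {ξ : Fin 2 → ℝ} (hξ : ξ ≠ 0) : 0 < S *ᵥ ξ ⬝ᵥ ξ := by
  refine pos_of_mul_pos_right ?_ h00.le
  rw [hS.mul_dotProduct_mulVec_fin_two]
  rcases eq_or_ne (ξ 1) 0 with h1 | h1
  · have h0 : ξ 0 ≠ 0 := fun h0 => hξ (by ext i; fin_cases i <;> assumption)
    rw [h1, mul_zero, add_zero, zero_pow two_ne_zero, mul_zero, add_zero]
    positivity
  · positivity

lemma dotProduct_mulVec_nonneg (hS : S.IsSymm) (h00 : 0 ≤ S 0 0) (h11 : 0 ≤ S 1 1)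
    (hdet : 0 ≤ S.det) (ξ : Fin 2 → ℝ) : 0 ≤ S *ᵥ ξ ⬝ᵥ ξ := by
  rcases h00.lt_or_eq with h00 | h00
  · refine nonneg_of_mul_nonneg_right ?_ h00
    rw [hS.mul_dotProduct_mulVec_fin_two]
    positivity
  · have h01 : S 0 1 = 0 := by
      rw [det_fin_two, hS.apply 0 1, ← h00] at hdet
      nlinarith [sq_nonneg (S 0 1)]
    have h10 : S 1 0 = 0 := hS.apply 0 1 ▸ h01
    simp only [mulVec, dotProduct, Fin.sum_univ_two, ← h00, h01, h10]
    nlinarith [mul_nonneg h11 (sq_nonneg (ξ 1))]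

end Matrix.IsSymm

noncomputable def binaryForm (c : ℕ → ℝ) (N : ℕ) (x y : ℝ) : ℝ :=
  ∑ j ∈ range (N + 1), c j * x ^ j * y ^ (N - j)

section BinaryForm

variable {c d p q r : ℕ → ℝ} {N : ℕ} {x y : ℝ}

lemma binaryForm_congr (h : ∀ j ≤ N, c j = d j) : binaryForm c N x y = binaryForm d N x y :=
  sum_congr rfl fun j hj => by rw [h j (Nat.lt_succ_iff.mp (mem_range.mp hj))]

lemma add_binaryForm (a b : ℝ) :
    a * binaryForm c N x y + b * binaryForm d N x y
      = binaryForm (fun j => a * c j + b * d j) N x y := by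
  simp only [binaryForm, mul_sum, ← sum_add_distrib]
  exact sum_congr rfl fun j _ => by ring

lemma mul_binaryForm_fst (hp : p 0 = 0) (hc : ∀ j, c j = p (j + 1)) :
    x * binaryForm c N x y = binaryForm p (N + 1) x y := by
  rw [binaryForm, binaryForm, sum_range_succ' _ (N + 1), hp, mul_sum]
  simp only [hc, zero_mul, add_zero, Nat.add_sub_add_right]
  exact sum_congr rfl fun j _ => by ring

lemma mul_binaryForm_snd (hc : c (N + 1) = 0) :
    y * binaryForm c N x y = binaryForm c (N + 1) x y := by
  rw [binaryForm, binaryForm, sum_range_succ _ (N + 1), hc, mul_sum]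
  simp only [zero_mul, add_zero]
  refine sum_congr rfl fun j hj => ?_
  rw [show N + 1 - j = N - j + 1 by have := mem_range.mp hj; omega]
  ring

lemma hasDerivAt_binaryForm_fst (c : ℕ → ℝ) (N : ℕ) (x y : ℝ) :
    HasDerivAt (fun t => binaryForm c (N + 1) t y)
      (binaryForm (fun j => ((j : ℝ) + 1) * c (j + 1)) N x y) x := by
  have h := HasDerivAt.fun_sum (u := range (N + 2)) fun j _ =>
    ((hasDerivAt_pow j x).const_mul (c j)).mul_const (y ^ (N + 1 - j))
  refine h.congr_deriv ?_
  rw [sum_range_succ']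
  simp only [binaryForm, Nat.cast_zero, zero_mul, mul_zero, add_zero,
    Nat.add_sub_cancel, Nat.add_sub_add_right, Nat.cast_succ]
  exact sum_congr rfl fun j _ => by ring

lemma hasDerivAt_binaryForm_snd (c : ℕ → ℝ) (N : ℕ) (x y : ℝ) :
    HasDerivAt (fun t => binaryForm c (N + 1) x t)
      (binaryForm (fun j => ((N : ℝ) + 1 - j) * c j) N x y) y := by
  have h := HasDerivAt.fun_sum (u := range (N + 2)) fun j _ =>
    (hasDerivAt_pow (N + 1 - j) y).const_mul (c j * x ^ j)
  refine h.congr_deriv ?_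
  rw [sum_range_succ]
  simp only [binaryForm, Nat.sub_self, Nat.cast_zero, zero_mul, mul_zero, add_zero]
  refine sum_congr rfl fun j hj => ?_
  have hj : j ≤ N := Nat.lt_succ_iff.mp (mem_range.mp hj)
  rw [Nat.cast_sub (by omega), show N + 1 - j - 1 = N - j by omega]
  push_cast
  ring

lemma binaryForm_nonneg (hc : ∀ j ≤ N, 0 ≤ c j) (hx : 0 ≤ x) (hy : 0 ≤ y) :
    0 ≤ binaryForm c N x y :=
  sum_nonneg fun j hj => by
    have := hc j (Nat.lt_succ_iff.mp (mem_range.mp hj))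
    positivity

lemma binaryForm_pos (hc : ∀ j ≤ N, 0 < c j) (hx : 0 < x) (hy : 0 < y) :
    0 < binaryForm c N x y :=
  sum_pos (fun j hj => by
    have := hc j (Nat.lt_succ_iff.mp (mem_range.mp hj))
    positivity) nonempty_range_add_one

lemma sq_binaryForm_le (hp : ∀ j ≤ N, 0 ≤ p j) (hr : ∀ j ≤ N, 0 ≤ r j)
    (hq : ∀ j ≤ N, q j ^ 2 ≤ p j * r j) (hx : 0 ≤ x) (hy : 0 ≤ y) :
    binaryForm q N x y ^ 2 ≤ binaryForm p N x y * binaryForm r N x y := by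
  refine sum_sq_le_sum_mul_sum_of_sq_le_mul _ (fun j hj => ?_) (fun j hj => ?_) fun j hj => ?_
  all_goals
    replace hj := Nat.lt_succ_iff.mp (mem_range.mp hj)
    have hz : 0 ≤ x ^ j * y ^ (N - j) := by positivity
  · have := hp j hj; positivity
  · have := hr j hj; positivity
  · calc (q j * x ^ j * y ^ (N - j)) ^ 2 = q j ^ 2 * (x ^ j * y ^ (N - j)) ^ 2 := by ring
      _ ≤ p j * r j * (x ^ j * y ^ (N - j)) ^ 2 := by gcongr; exact hq j hj
      _ = p j * x ^ j * y ^ (N - j) * (r j * x ^ j * y ^ (N - j)) := by ring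

lemma sq_binaryForm_lt (hr : ∀ j ≤ N, 0 < r j) (hq : ∀ j ≤ N, q j ^ 2 < p j * r j)
    (hx : 0 < x) (hy : 0 < y) :
    binaryForm q N x y ^ 2 < binaryForm p N x y * binaryForm r N x y := by
  refine sum_sq_lt_sum_mul_sum_of_sq_lt_mul _ nonempty_range_add_one (fun j hj => ?_) fun j hj => ?_
  all_goals
    replace hj := Nat.lt_succ_iff.mp (mem_range.mp hj)
    have hz : 0 < x ^ j * y ^ (N - j) := by positivity
  · have := hr j hj; positivity
  · calc (q j * x ^ j * y ^ (N - j)) ^ 2 = q j ^ 2 * (x ^ j * y ^ (N - j)) ^ 2 := by ring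
      _ < p j * r j * (x ^ j * y ^ (N - j)) ^ 2 := by gcongr; exact hq j hj
      _ = p j * x ^ j * y ^ (N - j) * (r j * x ^ j * y ^ (N - j)) := by ring

end BinaryForm

section Coefficients

variable {R mu : ℝ}

lemma alph_pos (hR : 0 < R) (hmu : 0 < mu) {m k : ℕ} (hk : k ≤ m + 1) :
    0 < alph R mu (m + 2) k := by
  have hk' : (k : ℝ) ≤ m + 1 := by exact_mod_cast hk
  have : 0 < (k : ℝ) + mu * ((m : ℝ) + 1 - k) := by
    rcases Nat.eq_zero_or_pos k with rfl | hk0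
    · simp only [Nat.cast_zero, zero_add, sub_zero]
      positivity
    · have : (0 : ℝ) < k := by exact_mod_cast hk0
      nlinarith [mul_nonneg hmu.le (sub_nonneg.mpr hk')]
  have := mul_pos hR this
  simp only [alph]
  push_cast
  linarith

lemma coefa_pos (hR : 0 < R) (hmu : 0 < mu) {m j : ℕ} (hj : j ≤ m + 2) :
    0 < coefa R mu (m + 2) j := by
  refine mul_pos (by exact_mod_cast Nat.choose_pos hj) (prod_pos fun k hk => ?_)
  have := alph_pos hR hmu (m := m) (k := k) (by have := mem_range.mp hk; omega)
  positivity

lemma coefa_succ_mul_alph {n j : ℕ} (h : alph R mu n j ≠ 0) :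
    ((j : ℝ) + 1) * coefa R mu n (j + 1) * alph R mu n j
      = ((n : ℝ) - j) * coefa R mu n j * (j + alph R mu n j) := by
  have hchoose : (n.choose (j + 1) : ℝ) * ((j : ℝ) + 1) = (n.choose j : ℝ) * ((n : ℝ) - j) := by
    rcases le_or_gt j n with hjn | hjn
    · rw [← Nat.cast_sub hjn]; exact_mod_cast Nat.choose_succ_right_eq n j
    · simp [Nat.choose_eq_zero_of_lt hjn, Nat.choose_eq_zero_of_lt (hjn.trans (Nat.lt_succ_self j))]
  unfold coefa
  rw [prod_range_succ]
  field_simp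
  linear_combination (∏ k ∈ range j, ((k : ℝ) + alph R mu n k) / alph R mu n k)
    * (j + alph R mu n j) * hchoose

lemma succ_mul_alph_sub_mul_alph_succ (n k : ℕ) :
    ((k : ℝ) + 1) * alph R mu n k - k * alph R mu n (k + 1) = R * mu * ((n : ℝ) - 1) := by
  simp only [alph]
  push_cast
  ring

lemma d11PhiCoef_pos (hR : 0 < R) (hmu : 0 < mu) {m j : ℕ} (hj : j ≤ m) :
    0 < ((j : ℝ) + 1) * ((j : ℝ) + 2) * coefa R mu (m + 2) (j + 2) := by
  have := coefa_pos hR hmu (m := m) (j := j + 2) (by omega)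
  positivity

lemma d12PhiCoef_pos (hR : 0 < R) (hmu : 0 < mu) {m j : ℕ} (hj : j ≤ m) :
    0 < ((j : ℝ) + 1) * ((m : ℝ) + 1 - j) * coefa R mu (m + 2) (j + 1) := by
  have : (j : ℝ) ≤ m := by exact_mod_cast hj
  exact mul_pos (mul_pos (by positivity) (by linarith)) (coefa_pos hR hmu (by omega))

lemma d22PhiCoef_pos (hR : 0 < R) (hmu : 0 < mu) {m j : ℕ} (hj : j ≤ m) :
    0 < ((m : ℝ) + 2 - j) * ((m : ℝ) + 1 - j) * coefa R mu (m + 2) j := by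
  have : (j : ℝ) ≤ m := by exact_mod_cast hj
  exact mul_pos (mul_pos (by linarith) (by linarith)) (coefa_pos hR hmu (by omega))

lemma d12PhiCoef_sq_lt (hR : 0 < R) (hmu : 0 < mu) {m j : ℕ} (hj : j ≤ m) :
    (((j : ℝ) + 1) * ((m : ℝ) + 1 - j) * coefa R mu (m + 2) (j + 1)) ^ 2
      < (((j : ℝ) + 1) * ((j : ℝ) + 2) * coefa R mu (m + 2) (j + 2))
        * (((m : ℝ) + 2 - j) * ((m : ℝ) + 1 - j) * coefa R mu (m + 2) j) := by
  set q := ((j : ℝ) + 1) * ((m : ℝ) + 1 - j) * coefa R mu (m + 2) (j + 1)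
  set p := ((j : ℝ) + 1) * ((j : ℝ) + 2) * coefa R mu (m + 2) (j + 2)
  set r := ((m : ℝ) + 2 - j) * ((m : ℝ) + 1 - j) * coefa R mu (m + 2) j
  set α₀ := alph R mu (m + 2) j
  set α₁ := alph R mu (m + 2) (j + 1)
  have hα₀ : 0 < α₀ := alph_pos hR hmu (by omega)
  have hα₁ : 0 < α₁ := alph_pos hR hmu (by omega)
  have hq : 0 < q := d12PhiCoef_pos hR hmu hj
  have hqr : q * α₀ = r * (j + α₀) := by
    have := coefa_succ_mul_alph hα₀.ne'
    push_cast at this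
    linear_combination ((m : ℝ) + 1 - j) * this
  have hpq : p * α₁ = q * (j + 1 + α₁) := by
    have := coefa_succ_mul_alph hα₁.ne'
    push_cast at this
    linear_combination ((j : ℝ) + 1) * this
  have hcross : 0 < (j + 1 + α₁) * α₀ - α₁ * (j + α₀) := by
    have := succ_mul_alph_sub_mul_alph_succ (R := R) (mu := mu) (m + 2) j
    push_cast at this
    rw [show (j + 1 + α₁) * α₀ - α₁ * (j + α₀) = R * mu * (m + 1) by linear_combination this]
    positivity
  have key : (p * r - q ^ 2) * (α₁ * (j + α₀)) = q ^ 2 * ((j + 1 + α₁) * α₀ - α₁ * (j + α₀)) := by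
    linear_combination r * (j + α₀) * hpq - q * (j + 1 + α₁) * hqr
  have : 0 < (p * r - q ^ 2) * (α₁ * (j + α₀)) := by rw [key]; positivity
  have : 0 < p * r - q ^ 2 := pos_of_mul_pos_left this (by positivity)
  linarith

end Coefficients

section Derivatives

variable (R mu : ℝ)

lemma d1Phi_eq (N : ℕ) (X : ℝ × ℝ) :
    d1Phi R mu (N + 1) X
      = binaryForm (fun j => ((j : ℝ) + 1) * coefa R mu (N + 1) (j + 1)) N X.1 X.2 :=
  (hasDerivAt_binaryForm_fst _ N X.1 X.2).deriv

lemma d2Phi_eq (N : ℕ) (X : ℝ × ℝ) :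
    d2Phi R mu (N + 1) X
      = binaryForm (fun j => ((N : ℝ) + 1 - j) * coefa R mu (N + 1) j) N X.1 X.2 :=
  (hasDerivAt_binaryForm_snd _ N X.1 X.2).deriv

lemma d11Phi_eq (m : ℕ) (X : ℝ × ℝ) :
    d11Phi R mu (m + 2) X = binaryForm
      (fun j => ((j : ℝ) + 1) * ((j : ℝ) + 2) * coefa R mu (m + 2) (j + 2)) m X.1 X.2 := by
  rw [d11Phi, funext fun t => d1Phi_eq R mu (m + 1) (t, X.2),
    (hasDerivAt_binaryForm_fst _ m X.1 X.2).deriv]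
  exact binaryForm_congr fun j _ => by push_cast; ring

lemma d12Phi_eq (m : ℕ) (X : ℝ × ℝ) :
    d12Phi R mu (m + 2) X = binaryForm
      (fun j => ((j : ℝ) + 1) * ((m : ℝ) + 1 - j) * coefa R mu (m + 2) (j + 1)) m X.1 X.2 := by
  rw [d12Phi, funext fun t => d2Phi_eq R mu (m + 1) (t, X.2),
    (hasDerivAt_binaryForm_fst _ m X.1 X.2).deriv]
  exact binaryForm_congr fun j _ => by push_cast; ring

lemma d22Phi_eq (m : ℕ) (X : ℝ × ℝ) :
    d22Phi R mu (m + 2) X = binaryForm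
      (fun j => ((m : ℝ) + 2 - j) * ((m : ℝ) + 1 - j) * coefa R mu (m + 2) j) m X.1 X.2 := by
  rw [d22Phi, funext fun t => d2Phi_eq R mu (m + 1) (X.1, t),
    (hasDerivAt_binaryForm_snd _ m X.1 X.2).deriv]
  exact binaryForm_congr fun j _ => by push_cast; ring

end Derivatives

section HessianSigns

variable {R mu : ℝ} {X : ℝ × ℝ}

lemma d11Phi_pos (hR : 0 < R) (hmu : 0 < mu) (m : ℕ) (hx : 0 < X.1) (hy : 0 < X.2) :
    0 < d11Phi R mu (m + 2) X := by
  rw [d11Phi_eq]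
  exact binaryForm_pos (fun j hj => d11PhiCoef_pos hR hmu hj) hx hy

lemma d11Phi_nonneg (hR : 0 < R) (hmu : 0 < mu) (m : ℕ) (hx : 0 ≤ X.1) (hy : 0 ≤ X.2) :
    0 ≤ d11Phi R mu (m + 2) X := by
  rw [d11Phi_eq]
  exact binaryForm_nonneg (fun j hj => (d11PhiCoef_pos hR hmu hj).le) hx hy

lemma d12Phi_nonneg (hR : 0 < R) (hmu : 0 < mu) (m : ℕ) (hx : 0 ≤ X.1) (hy : 0 ≤ X.2) :
    0 ≤ d12Phi R mu (m + 2) X := by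
  rw [d12Phi_eq]
  exact binaryForm_nonneg (fun j hj => (d12PhiCoef_pos hR hmu hj).le) hx hy

lemma d22Phi_nonneg (hR : 0 < R) (hmu : 0 < mu) (m : ℕ) (hx : 0 ≤ X.1) (hy : 0 ≤ X.2) :
    0 ≤ d22Phi R mu (m + 2) X := by
  rw [d22Phi_eq]
  exact binaryForm_nonneg (fun j hj => (d22PhiCoef_pos hR hmu hj).le) hx hy

lemma d12Phi_sq_le (hR : 0 < R) (hmu : 0 < mu) (m : ℕ) (hx : 0 ≤ X.1) (hy : 0 ≤ X.2) :
    d12Phi R mu (m + 2) X ^ 2 ≤ d11Phi R mu (m + 2) X * d22Phi R mu (m + 2) X := by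
  rw [d11Phi_eq, d12Phi_eq, d22Phi_eq]
  exact sq_binaryForm_le (fun j hj => (d11PhiCoef_pos hR hmu hj).le)
    (fun j hj => (d22PhiCoef_pos hR hmu hj).le) (fun j hj => (d12PhiCoef_sq_lt hR hmu hj).le) hx hy

lemma d12Phi_sq_lt (hR : 0 < R) (hmu : 0 < mu) (m : ℕ) (hx : 0 < X.1) (hy : 0 < X.2) :
    d12Phi R mu (m + 2) X ^ 2 < d11Phi R mu (m + 2) X * d22Phi R mu (m + 2) X := by
  rw [d11Phi_eq, d12Phi_eq, d22Phi_eq]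
  exact sq_binaryForm_lt (fun j hj => d22PhiCoef_pos hR hmu hj)
    (fun j hj => d12PhiCoef_sq_lt hR hmu hj) hx hy

end HessianSigns

section MobilityProduct

variable {R mu : ℝ}

lemma d2Phi_offDiag_identity (hR : 0 < R) (hmu : 0 < mu) (m : ℕ) (X : ℝ × ℝ) :
    R * (X.1 * d11Phi R mu (m + 2) X) + mu * R * (X.2 * d12Phi R mu (m + 2) X)
      = (1 + R) * (X.1 * d12Phi R mu (m + 2) X) + mu * R * (X.2 * d22Phi R mu (m + 2) X) := by
  have e11 : X.1 * d11Phi R mu (m + 2) X = binaryForm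
      (fun j => (j : ℝ) * ((j : ℝ) + 1) * coefa R mu (m + 2) (j + 1)) (m + 1) X.1 X.2 := by
    rw [d11Phi_eq]; exact mul_binaryForm_fst (by simp) fun j => by push_cast; ring
  have e12 : X.2 * d12Phi R mu (m + 2) X = binaryForm
      (fun j => ((j : ℝ) + 1) * ((m : ℝ) + 1 - j) * coefa R mu (m + 2) (j + 1)) (m + 1) X.1 X.2 := by
    rw [d12Phi_eq]; exact mul_binaryForm_snd (by push_cast; ring)
  have e21 : X.1 * d12Phi R mu (m + 2) X = binaryForm
      (fun j => (j : ℝ) * ((m : ℝ) + 2 - j) * coefa R mu (m + 2) j) (m + 1) X.1 X.2 := by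
    rw [d12Phi_eq]; exact mul_binaryForm_fst (by simp) fun j => by push_cast; ring
  have e22 : X.2 * d22Phi R mu (m + 2) X = binaryForm
      (fun j => ((m : ℝ) + 2 - j) * ((m : ℝ) + 1 - j) * coefa R mu (m + 2) j) (m + 1) X.1 X.2 := by
    rw [d22Phi_eq]; exact mul_binaryForm_snd (by push_cast; ring)
  rw [e11, e12, e21, e22, add_binaryForm, add_binaryForm]
  refine binaryForm_congr fun j hj => ?_
  have := coefa_succ_mul_alph (alph_pos hR hmu (m := m) hj).ne'
  simp only [alph] at this
  push_cast at this
  linear_combination this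

lemma hessPhi_mul_mobM_isSymm (hR : 0 < R) (hmu : 0 < mu) (m : ℕ) (X : ℝ × ℝ) :
    (hessPhi R mu (m + 2) X * mobM R mu X).IsSymm := by
  have := d2Phi_offDiag_identity hR hmu m X
  refine IsSymm.ext fun i j => ?_
  fin_cases i <;> fin_cases j <;> simp [hessPhi, mobM, mul_apply, Fin.sum_univ_two]
    <;> linarith

lemma hessPhi_mul_mobM_zero_zero (n : ℕ) (X : ℝ × ℝ) :
    (hessPhi R mu n X * mobM R mu X) 0 0
      = d11Phi R mu n X * ((1 + R) * X.1) + d12Phi R mu n X * (mu * R * X.2) := by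
  simp [hessPhi, mobM, mul_apply, Fin.sum_univ_two]

lemma hessPhi_mul_mobM_one_one (n : ℕ) (X : ℝ × ℝ) :
    (hessPhi R mu n X * mobM R mu X) 1 1
      = d12Phi R mu n X * (R * X.1) + d22Phi R mu n X * (mu * R * X.2) := by
  simp [hessPhi, mobM, mul_apply, Fin.sum_univ_two]

lemma det_hessPhi_mul_mobM (n : ℕ) (X : ℝ × ℝ) :
    (hessPhi R mu n X * mobM R mu X).det
      = (d11Phi R mu n X * d22Phi R mu n X - d12Phi R mu n X ^ 2) * (mu * R * X.1 * X.2) := by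
  rw [det_mul, hessPhi, mobM, det_fin_two_of, det_fin_two_of]
  ring

end MobilityProduct

theorem stmt10 (R mu : ℝ) (hR : 0 < R) (hmu : 0 < mu) (n : ℕ) (hn : 2 ≤ n) :
    (∀ X : ℝ × ℝ, 0 < X.1 → 0 < X.2 →
      (hessPhi R mu n X * mobM R mu X).IsSymm ∧
      ∀ ξ : Fin 2 → ℝ, ξ ≠ 0 →
        0 < dotProduct (((hessPhi R mu n X * mobM R mu X)).mulVec ξ) ξ) ∧
    (∀ X : ℝ × ℝ, 0 ≤ X.1 → 0 ≤ X.2 →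
      ∀ ξ : Fin 2 → ℝ,
        0 ≤ dotProduct (((hessPhi R mu n X * mobM R mu X)).mulVec ξ) ξ) := by
  obtain ⟨m, rfl⟩ : ∃ m, n = m + 2 := ⟨n - 2, by omega⟩
  refine ⟨fun X hx hy => ⟨hessPhi_mul_mobM_isSymm hR hmu m X, fun ξ hξ => ?_⟩,
    fun X hx hy ξ => ?_⟩
  · have h11 := d11Phi_pos hR hmu m hx hy
    have h12 := d12Phi_nonneg hR hmu m hx.le hy.le
    have hdet := sub_pos.mpr (d12Phi_sq_lt hR hmu m hx hy)
    refine (hessPhi_mul_mobM_isSymm hR hmu m X).dotProduct_mulVec_pos ?_ ?_ hξ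
    · rw [hessPhi_mul_mobM_zero_zero]; positivity
    · rw [det_hessPhi_mul_mobM]; positivity
  · have h11 := d11Phi_nonneg hR hmu m hx hy
    have h12 := d12Phi_nonneg hR hmu m hx hy
    have h22 := d22Phi_nonneg hR hmu m hx hy
    have hdet := sub_nonneg.mpr (d12Phi_sq_le hR hmu m hx hy)
    refine (hessPhi_mul_mobM_isSymm hR hmu m X).dotProduct_mulVec_nonneg ?_ ?_ ?_ ξ
    · rw [hessPhi_mul_mobM_zero_zero]; positivity
    · rw [hessPhi_mul_mobM_one_one]; positivity
    · rw [det_hessPhi_mul_mobM]; positivity
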